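/- arXiv:0909.3795 — 2 statements merged into one kernel-verified Lean document; each statement's English description precedes it below -/
import Mathlib

section
/- Let n be a natural number with n > 2^{ρ(n)}, where ρ(n) is the least i such that the i-th binary digit of n is 0. Then the binomial coefficient C(n − 2^{ρ(n)}, 2^{ρ(n)}) is odd. -/
/-!
By Lucas's theorem at `p = 2`, `C(m, 2^r) ≡ ⌊m / 2^r⌋ (mod 2)`, so `C(m, 2^r)` is odd exactly when
bit `r` of `m` is set. For `r = ρ(n)` the lowest `r + 1` bits of `n` are `01…1`, so
`n = 2^(r+1) q + 2^r - 1` with `q ≥ 1` once `n > 2^r`, and `n - 2^r = 2^(r+1) q - 1` has bit `r` set.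
-/

/-- ρ(n) is the least bit position where `n` has binary digit 0. -/
noncomputable def rho (n : ℕ) : ℕ := sInf {i | n.testBit i = false}

theorem Nat.choose_two_pow_modEq_div (m r : ℕ) : m.choose (2 ^ r) ≡ m / 2 ^ r [MOD 2] := by
  have : Fact (Nat.Prime 2) := ⟨Nat.prime_two⟩
  have lucas := Choose.choose_modEq_choose_mul_prod_range_choose (n := m) (k := 2 ^ r) (p := 2) r
  have hdigits : ∀ i ∈ Finset.range r, (m / 2 ^ i % 2).choose (2 ^ r / 2 ^ i % 2) = 1 := by
    intro i hi
    rw [Nat.pow_div (Finset.mem_range.1 hi).le two_pos,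
      Nat.two_pow_mod_two_eq_zero.2 (Nat.sub_pos_of_lt (Finset.mem_range.1 hi)), Nat.choose_zero_right]
  rw [Finset.prod_eq_one hdigits, Nat.div_self (Nat.two_pow_pos r), Nat.choose_one_right,
    Nat.cast_one, mul_one] at lucas
  exact Int.natCast_modEq_iff.1 lucas

theorem Nat.odd_choose_two_pow_iff_testBit (m r : ℕ) : Odd (m.choose (2 ^ r)) ↔ m.testBit r := by
  rw [Nat.odd_iff, Nat.choose_two_pow_modEq_div, Nat.testBit_eq_decide_div_mod_eq, decide_eq_true_iff]

theorem testBit_rho (n : ℕ) : n.testBit (rho n) = false :=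
  Nat.sInf_mem (s := {i | n.testBit i = false}) ⟨n, Nat.testBit_lt_two_pow n.lt_two_pow_self⟩

theorem testBit_of_lt_rho {n i : ℕ} (hi : i < rho n) : n.testBit i = true := by
  simpa using Nat.notMem_of_lt_sInf hi

theorem mod_two_pow_rho_succ (n : ℕ) : n % 2 ^ (rho n + 1) = 2 ^ rho n - 1 := by
  refine Nat.eq_of_testBit_eq fun i => ?_
  rw [Nat.testBit_mod_two_pow, Nat.testBit_two_pow_sub_one]
  rcases lt_trichotomy i (rho n) with hi | rfl | hi
  · simp [hi, testBit_of_lt_rho hi, Nat.lt_succ_of_lt hi]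
  · simp [testBit_rho]
  · simp [hi.not_gt, Nat.not_lt.2 hi]

theorem Nat.testBit_sub_two_pow_of_mod_two_pow_succ {n r : ℕ} (hmod : n % 2 ^ (r + 1) = 2 ^ r - 1)
    (h : 2 ^ r < n) : (n - 2 ^ r).testBit r = true := by
  have hn : n = 2 ^ (r + 1) * (n / 2 ^ (r + 1)) + (2 ^ r - 1) := by
    rw [← hmod, Nat.div_add_mod]
  set q := n / 2 ^ (r + 1)
  have hr : 1 ≤ 2 ^ r := Nat.one_le_two_pow
  have hq : 0 < q := Nat.pos_of_ne_zero fun hq => by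
    rw [hq, mul_zero, zero_add] at hn
    omega
  have hsub : n - 2 ^ r = 2 ^ r * (2 * q - 1) + (2 ^ r - 1) := by
    rw [pow_succ] at hn
    zify [hr, (by omega : 1 ≤ 2 * q), h.le] at hn ⊢
    linear_combination hn
  rw [hsub, Nat.testBit_mul_two_pow_add_eq, Nat.testBit_two_pow_sub_one]
  simp only [lt_irrefl, decide_false, Bool.xor_false, decide_eq_true_eq]
  omega

theorem choose_sub_pow_rho_odd (n : ℕ) (h : 2 ^ rho n < n) :
    Odd ((n - 2 ^ rho n).choose (2 ^ rho n)) :=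
  (Nat.odd_choose_two_pow_iff_testBit _ _).2 <|
    Nat.testBit_sub_two_pow_of_mod_two_pow_succ (mod_two_pow_rho_succ n) h
end

section
/- Let (i_1, …, i_r) be a sequence of positive natural numbers and let d be a natural number. Suppose (i) i_1 − (i_2 + ⋯ + i_r + d) > 0, (ii) i_1 − (i_2 + ⋯ + i_r + d) < 2^{ρ(i_1)}, and (iii) 0 ≤ 2 i_{s+1} − i_s < 2^{ρ(i_{s+1})} for all 1 ≤ s ≤ r−1, where ρ(n) is the least bit position where n has binary digit 0. Then every i_s is odd. -/
lemma rho_of_even {n : ℕ} (h : Even n) : rho n = 0 := by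
  have h0 : n.testBit 0 = false := by
    rw [Nat.testBit_zero]
    simpa [Nat.even_iff] using h
  exact Nat.eq_zero_of_le_zero (Nat.sInf_le h0)

theorem all_entries_odd (r : ℕ) (i : ℕ → ℕ) (d : ℕ)
    (hpos : ∀ s, 1 ≤ s → s ≤ r → 0 < i s)
    (hex_pos : 0 < (i 1 : ℤ) - ((∑ s ∈ Finset.Icc 2 r, (i s : ℤ)) + d))
    (hex_lt : (i 1 : ℤ) - ((∑ s ∈ Finset.Icc 2 r, (i s : ℤ)) + d) < 2 ^ rho (i 1))
    (hcond : ∀ s, 1 ≤ s → s ≤ r - 1 →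
      i s ≤ 2 * i (s + 1) ∧ 2 * i (s + 1) - i s < 2 ^ rho (i (s + 1))) :
    ∀ s, 1 ≤ s → s ≤ r → Odd (i s) := by
  have key : ∀ s, 1 ≤ s → s ≤ r → ¬ Even (i s) := by
    intro s
    induction s with
    | zero => omega
    | succ n ih =>
      intro h1 h2 hev
      rcases Nat.eq_zero_or_pos n with hn | hn
      · subst hn
        rw [rho_of_even hev] at hex_lt
        simp at hex_lt
        omega
      · obtain ⟨hle, hlt⟩ := hcond n hn (by omega)
        rw [rho_of_even hev] at hlt
        simp at hlt
        have : i n = 2 * i (n + 1) := by omega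
        exact ih (by omega) (by omega) ⟨i (n + 1), by omega⟩
  intro s h1 h2
  exact Nat.not_even_iff_odd.mp (key s h1 h2)
end
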